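/- arXiv:math/9507203 — 9 statements merged into one kernel-verified Lean document; each statement's English description precedes it below -/
import Mathlib

section
/- Let G be a group in which commutation is transitive on nontrivial elements. Then the centralizer of any nontrivial element of G is a maximal abelian subgroup of G, and conversely every maximal abelian subgroup of a nontrivial such G is the centralizer of some nontrivial element. -/
/-- A maximal abelian subgroup: abelian and maximal among abelian subgroups. -/
def IsMaximalAbelian {G : Type*} [Group G] (M : Subgroup G) : Prop :=
  IsMulCommutative M ∧ ∀ N : Subgroup G, IsMulCommutative N → M ≤ N → N = M

/-- A subgroup `H` is malnormal (conjugately separated): `H ∩ H^x = 1` for `x ∉ H`. -/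
def IsMalnormal {G : Type*} [Group G] (H : Subgroup G) : Prop :=
  ∀ x : G, x ∉ H → ∀ g ∈ H, x⁻¹ * g * x ∈ H → g = 1

/-- A CSA-group: all maximal abelian subgroups are malnormal. -/
def IsCSA (G : Type*) [Group G] : Prop :=
  ∀ M : Subgroup G, IsMaximalAbelian M → IsMalnormal M

/-- Commutation is transitive on nontrivial elements. -/
def CommTrans (G : Type*) [Group G] : Prop :=
  ∀ a b c : G, a ≠ 1 → b ≠ 1 → c ≠ 1 → Commute a b → Commute b c → Commute a c


/-!
An abelian subgroup containing `g` lies in the centralizer of `g`, and transitivity of commutation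
makes the centralizer of a nontrivial `g` abelian; so it is maximal abelian. Conversely a maximal
abelian subgroup `M` of a nontrivial group is not trivial (it would lie below some `zpowers x`),
so it contains some `g ≠ 1`, and then `M ≤ C(g)` forces equality.
-/

theorem Subgroup.mem_centralizer_singleton_iff_commute {G : Type*} [Group G] {g h : G} :
    h ∈ Subgroup.centralizer {g} ↔ Commute g h := by
  simp only [Subgroup.mem_centralizer_iff, Set.mem_singleton_iff, forall_eq]
  rfl

theorem Subgroup.le_centralizer_singleton_of_mem {G : Type*} [Group G] {N : Subgroup G}
    [IsMulCommutative N] {g : G} (hg : g ∈ N) : N ≤ Subgroup.centralizer {g} :=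
  N.le_centralizer.trans (Subgroup.centralizer_le (Set.singleton_subset_iff.mpr hg))

theorem IsMaximalAbelian.ne_bot {G : Type*} [Group G] [Nontrivial G] {M : Subgroup G}
    (hM : IsMaximalAbelian M) : M ≠ ⊥ := by
  rintro rfl
  obtain ⟨x, hx⟩ := exists_ne (1 : G)
  exact hx (Subgroup.zpowers_eq_bot.mp (hM.2 _ inferInstance bot_le))

theorem IsMaximalAbelian.eq_centralizer_of_mem {G : Type*} [Group G] {M : Subgroup G}
    (hM : IsMaximalAbelian M) {g : G} (hg : g ∈ M)
    (hcomm : IsMulCommutative (Subgroup.centralizer {g})) : M = Subgroup.centralizer {g} :=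
  have : IsMulCommutative M := hM.1
  (hM.2 _ hcomm (Subgroup.le_centralizer_singleton_of_mem hg)).symm

namespace CommTrans

variable {G : Type*} [Group G]

theorem isMulCommutative_centralizer (hG : CommTrans G) {g : G} (hg : g ≠ 1) :
    IsMulCommutative (Subgroup.centralizer {g}) := by
  refine ⟨⟨fun ⟨a, ha⟩ ⟨b, hb⟩ => Subtype.ext ?_⟩⟩
  rw [Subgroup.mem_centralizer_singleton_iff_commute] at ha hb
  change Commute a b
  rcases eq_or_ne a 1 with rfl | ha1
  · exact Commute.one_left b
  rcases eq_or_ne b 1 with rfl | hb1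
  · exact Commute.one_right a
  exact hG a g b ha1 hg hb1 ha.symm hb

theorem isMaximalAbelian_centralizer (hG : CommTrans G) {g : G} (hg : g ≠ 1) :
    IsMaximalAbelian (Subgroup.centralizer {g}) := by
  refine ⟨hG.isMulCommutative_centralizer hg, fun N _ hle => ?_⟩
  have hgN : g ∈ N := hle (Subgroup.mem_centralizer_singleton_iff_commute.mpr (Commute.refl g))
  exact le_antisymm (Subgroup.le_centralizer_singleton_of_mem hgN) hle

end CommTrans

theorem stmt_3 {G : Type*} [Group G] (hG : CommTrans G) :
    (∀ g : G, g ≠ 1 → IsMaximalAbelian (Subgroup.centralizer {g})) ∧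
    (Nontrivial G → ∀ M : Subgroup G, IsMaximalAbelian M →
      ∃ g : G, g ≠ 1 ∧ M = Subgroup.centralizer {g}) := by
  refine ⟨fun g hg => hG.isMaximalAbelian_centralizer hg, fun _ M hM => ?_⟩
  obtain ⟨g, hgM, hg⟩ := M.bot_or_exists_ne_one.resolve_left hM.ne_bot
  exact ⟨g, hg, hM.eq_centralizer_of_mem hgM (hG.isMulCommutative_centralizer hg)⟩
end

section
/- Let G be a torsion-free group in which commutation is transitive on nontrivial elements. If xⁿ = yⁿ for some nonzero integer n, then x = y. -/
/-! `x` commutes with `xⁿ = yⁿ`, which commutes with `y`; if these are nontrivial, transitivity of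
commutation makes `x` and `y` commute, so `(x y⁻¹)ⁿ = xⁿ y⁻ⁿ = 1` and torsion-freeness gives `x = y`.
If instead `xⁿ = yⁿ = 1`, torsion-freeness gives `x = y = 1` directly. -/

theorem eq_one_of_zpow_eq_one_of_torsionFree {G : Type*} [Group G]
    (htf : ∀ g : G, g ≠ 1 → ¬IsOfFinOrder g) {g : G} {n : ℤ} (hn : n ≠ 0) (hg : g ^ n = 1) :
    g = 1 :=
  not_not.mp fun hg1 => htf g hg1 (isOfFinOrder_iff_zpow_eq_one.mpr ⟨n, hn, hg⟩)

theorem Commute.eq_of_zpow_eq_of_torsionFree {G : Type*} [Group G]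
    (htf : ∀ g : G, g ≠ 1 → ¬IsOfFinOrder g) {x y : G} (hxy : Commute x y) {n : ℤ} (hn : n ≠ 0)
    (h : x ^ n = y ^ n) : x = y := by
  have hpow : (x * y⁻¹) ^ n = 1 := by
    rw [hxy.inv_right.mul_zpow, inv_zpow, h, mul_inv_cancel]
  exact mul_inv_eq_one.mp (eq_one_of_zpow_eq_one_of_torsionFree htf hn hpow)

theorem CommTrans.commute_of_zpow_eq {G : Type*} [Group G] (hG : CommTrans G) {x y : G} {n : ℤ}
    (h : x ^ n = y ^ n) (hxn : x ^ n ≠ 1) : Commute x y := by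
  have hx : x ≠ 1 := by rintro rfl; exact hxn (one_zpow n)
  have hy : y ≠ 1 := by rintro rfl; exact hxn (h.trans (one_zpow n))
  exact hG x (x ^ n) y hx hxn hy (Commute.self_zpow x n) (h ▸ Commute.zpow_self y n)

theorem stmt_5 {G : Type*} [Group G] (htf : ∀ g : G, g ≠ 1 → ¬IsOfFinOrder g)
    (hG : CommTrans G) (x y : G) (n : ℤ) (hn : n ≠ 0)
    (h : x ^ n = y ^ n) : x = y := by
  by_cases hxn : x ^ n = 1
  · rw [eq_one_of_zpow_eq_one_of_torsionFree htf hn hxn,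
      eq_one_of_zpow_eq_one_of_torsionFree htf hn (h.symm.trans hxn)]
  · exact (hG.commute_of_zpow_eq h hxn).eq_of_zpow_eq_of_torsionFree htf hn h
end

section
/- If G is a nonabelian group in which commutation is transitive on nontrivial elements, then G is not isomorphic to a direct product H × K with both H and K nontrivial. -/
/-!
In `H × K` with `h ≠ 1` in `H`, every nontrivial element `a` commutes with a nontrivial element
of `1 × K` (namely `(1, a.2)`, or any `(1, k)` when `a.2 = 1`), which in turn commutes with
`(h, 1)`. Transitivity makes `(h, 1)` central, and a nontrivial central element forces any
group with transitive commutation to be abelian.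
-/

namespace CommTrans

variable {G : Type*} [Group G]

theorem of_mulEquiv {H : Type*} [Group H] (e : G ≃* H) (hG : CommTrans G) : CommTrans H := by
  intro a b c ha hb hc hab hbc
  simpa using (hG (e.symm a) (e.symm b) (e.symm c) (by simpa using ha) (by simpa using hb)
    (by simpa using hc) (hab.map e.symm) (hbc.map e.symm)).map e

theorem commute_of_forall_commute (hG : CommTrans G) {c : G} (hc : c ≠ 1)
    (hcen : ∀ a, Commute a c) (a b : G) : Commute a b := by
  rcases eq_or_ne a 1 with rfl | ha
  · exact Commute.one_left b
  rcases eq_or_ne b 1 with rfl | hb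
  · exact Commute.one_right a
  exact hG a c b ha hc hb (hcen a) (hcen b).symm

theorem prod_commute_mk_one {H K : Type*} [Group H] [Group K] [Nontrivial K]
    (hT : CommTrans (H × K)) {h : H} (hh : h ≠ 1) (a : H × K) : Commute a (h, 1) := by
  rcases eq_or_ne a 1 with rfl | ha
  · exact Commute.one_left _
  obtain ⟨y, hy, hay⟩ : ∃ y : K, y ≠ 1 ∧ Commute a (1, y) := by
    by_cases ha₂ : a.2 = 1
    · obtain ⟨k, hk⟩ := exists_ne (1 : K)
      exact ⟨k, hk, .prod (.one_right a.1) (ha₂ ▸ .one_left k)⟩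
    · exact ⟨a.2, ha₂, (Commute.one_right a.1).prod (Commute.refl a.2)⟩
  refine hT a (1, y) (h, 1) ha (by simp [hy]) (by simp [hh]) hay ?_
  exact (Commute.one_left h).prod (Commute.one_right y)

end CommTrans

theorem stmt_7 {G : Type*} [Group G] (hna : ¬∀ a b : G, a * b = b * a)
    (hG : CommTrans G) :
    ∀ (H K : Type*) [Group H] [Group K], Nontrivial H → Nontrivial K →
      ¬Nonempty (G ≃* H × K) := by
  intro H K _ _ _ _ ⟨e⟩
  have hT : CommTrans (H × K) := hG.of_mulEquiv e
  obtain ⟨h, hh⟩ := exists_ne (1 : H)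
  have hcomm := hT.commute_of_forall_commute (c := (h, 1)) (by simp [hh])
    (hT.prod_commute_mk_one hh)
  exact hna fun a b => e.injective (by rw [map_mul, map_mul, (hcomm (e a) (e b)).eq])
end

section
/- A subgroup of a CSA-group is a CSA-group. -/
open Function

section

variable {G H : Type*} [Group G] [Group H]

lemma isMaximalAbelian_iff_maximal (M : Subgroup G) :
    IsMaximalAbelian M ↔ Maximal (fun N : Subgroup G ↦ IsMulCommutative N) M :=
  ⟨fun ⟨hM, hmax⟩ ↦ ⟨hM, fun N hN hle ↦ (hmax N hN hle).le⟩,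
    fun ⟨hM, hmax⟩ ↦ ⟨hM, fun _ hN hle ↦ le_antisymm (hmax hN hle) hle⟩⟩

lemma exists_isMaximalAbelian_ge (A : Subgroup G) [IsMulCommutative A] :
    ∃ M : Subgroup G, A ≤ M ∧ IsMaximalAbelian M := by
  simp_rw [isMaximalAbelian_iff_maximal]
  refine zorn_le_nonempty₀ _ (fun c hc hchain y hy ↦ ?_) A ‹_›
  have : Nonempty c := ⟨⟨y, hy⟩⟩
  have : ∀ N : c, IsMulCommutative (N : Subgroup G) := fun N ↦ hc N.2
  refine ⟨sSup c, ?_, fun _ ↦ le_sSup⟩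
  rw [sSup_eq_iSup']
  exact Subgroup.isMulCommutative_iSup hchain.directed

lemma IsMalnormal.comap {M : Subgroup G} (hM : IsMalnormal M) {f : H →* G} (hf : Injective f) :
    IsMalnormal (M.comap f) := fun x hx g hg hconj ↦
  hf <| by simpa using hM (f x) hx (f g) hg (by simpa using hconj)

lemma IsMaximalAbelian.exists_eq_comap {M : Subgroup H} (hM : IsMaximalAbelian M) {f : H →* G}
    (hf : Injective f) : ∃ M' : Subgroup G, IsMaximalAbelian M' ∧ M'.comap f = M := by
  have := hM.1
  obtain ⟨M', hle, hM'⟩ := exists_isMaximalAbelian_ge (M.map f)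
  have := hM'.1
  exact ⟨M', hM', hM.2 _ (M'.comap_injective_isMulCommutative hf)
    (Subgroup.map_le_iff_le_comap.1 hle)⟩

lemma IsCSA.of_injective (hG : IsCSA G) {f : H →* G} (hf : Injective f) : IsCSA H := by
  intro M hM
  obtain ⟨M', hM', rfl⟩ := hM.exists_eq_comap hf
  exact (hG M' hM').comap hf

end

theorem stmt_8 {G : Type*} [Group G] (hG : IsCSA G) (H : Subgroup G) :
    IsCSA H :=
  hG.of_injective H.subtype_injective
end

section
/- A nonabelian CSA-group contains no nonabelian solvable subgroup. -/
/-!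
In a CSA group a subgroup `K` with abelian commutator subgroup `A = ⁅K, K⁆` is abelian: if `A ≠ 1`,
put `A` in a maximal abelian subgroup `M`; every `x ∈ K` normalizes `A`, so it conjugates a
nontrivial element of `M` back into `M`, and malnormality of `M` forces `x ∈ M`. Climbing the
derived series of a solvable `H` from its trivial last term up to `H` shows that `H` is abelian.
-/

namespace Subgroup

variable {G : Type*} [Group G]

theorem isMulCommutative_of_le {K M : Subgroup G} [IsMulCommutative M] (hKM : K ≤ M) :
    IsMulCommutative K :=
  le_centralizer_iff_isMulCommutative.mp <|
    hKM.trans <| (le_centralizer M).trans <| centralizer_le hKM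

theorem exists_isMaximalAbelian_ge {A : Subgroup G} (hA : IsMulCommutative A) :
    ∃ M : Subgroup G, A ≤ M ∧ IsMaximalAbelian M := by
  obtain ⟨M, hAM, hM, hMmax⟩ := zorn_le_nonempty₀ {N : Subgroup G | IsMulCommutative N}
    (fun c hc hchain N hN => by
      have : Nonempty c := ⟨⟨N, hN⟩⟩
      have : ∀ i : c, IsMulCommutative (i : Subgroup G) := fun i => hc i.2
      refine ⟨sSup c, ?_, fun _ => le_sSup⟩
      rw [Set.mem_ofPred_eq, sSup_eq_iSup']
      exact isMulCommutative_iSup hchain.directedOn.directed_val) A hA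
  exact ⟨M, hAM, hM, fun N hN hMN => le_antisymm (hMmax hN hMN) hMN⟩

end Subgroup

section CSA

variable {G : Type*} [Group G]

theorem IsMalnormal.le_of_le_normalizer {M A K : Subgroup G} (hM : IsMalnormal M) (hAM : A ≤ M)
    (hA : A ≠ ⊥) (hK : K ≤ Subgroup.normalizer (A : Set G)) : K ≤ M := by
  obtain ⟨⟨a, ha⟩, ha1⟩ := A.ne_bot_iff_exists_ne_one.mp hA
  intro x hx
  by_contra hxM
  have hconj : x⁻¹ * a * x ∈ A := (Subgroup.mem_normalizer_iff''.mp (hK hx) a).mp ha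
  exact ha1 (Subtype.ext (hM x hxM a (hAM ha) (hAM hconj)))

theorem IsCSA.isMulCommutative_of_isMulCommutative_commutator (hG : IsCSA G) {K : Subgroup G}
    (hK : IsMulCommutative (⁅K, K⁆ : Subgroup G)) : IsMulCommutative K := by
  by_cases hbot : ⁅K, K⁆ = ⊥
  · exact Subgroup.commutator_self_eq_bot_iff.mp hbot
  obtain ⟨M, hKM, hM⟩ := Subgroup.exists_isMaximalAbelian_ge hK
  have : IsMulCommutative M := hM.1
  exact Subgroup.isMulCommutative_of_le <|
    (hG M hM).le_of_le_normalizer hKM hbot (Subgroup.normalizer_commutator_ge_left K K)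

theorem IsCSA.isMulCommutative_map_derivedSeries (hG : IsCSA G) (H : Subgroup G) {k n : ℕ}
    (hn : derivedSeries H (k + n) = ⊥) :
    IsMulCommutative ((derivedSeries H k).map H.subtype) := by
  induction n generalizing k with
  | zero =>
    rw [Nat.add_zero] at hn
    rw [hn, Subgroup.map_bot]
    infer_instance
  | succ n ih =>
    have hnext := ih (k := k + 1) (by rwa [Nat.add_right_comm, Nat.add_assoc])
    rw [derivedSeries_succ, Subgroup.map_commutator] at hnext
    exact hG.isMulCommutative_of_isMulCommutative_commutator hnext

end CSA

theorem stmt_10_general {G : Type*} [Group G]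
    (hG : IsCSA G) (H : Subgroup G) (hsolv : IsSolvable H) :
    IsMulCommutative H := by
  obtain ⟨n, hn⟩ := hsolv.solvable
  have hH := hG.isMulCommutative_map_derivedSeries H (k := 0) (by rwa [Nat.zero_add])
  rwa [derivedSeries_zero, ← MonoidHom.range_eq_map, Subgroup.range_subtype] at hH

theorem stmt_10 {G : Type*} [Group G] (hna : ¬∀ a b : G, a * b = b * a)
    (hG : IsCSA G) (H : Subgroup G) (hsolv : IsSolvable H) :
    IsMulCommutative H :=
  stmt_10_general hG H hsolv
end

section
/- If G is a nonabelian CSA-group and u² = 1 for some u ∈ G, then u = 1; that is, any nonabelian CSA-group has no elements of order 2. -/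
/-- Every element lies in a maximal abelian subgroup (Zorn). -/
lemma exists_maximalAbelian_mem {G : Type*} [Group G] (a : G) :
    ∃ M : Subgroup G, IsMaximalAbelian M ∧ a ∈ M := by
  obtain ⟨M, hle, hM⟩ := zorn_le_nonempty₀ {N : Subgroup G | IsMulCommutative N}
    (fun c hcs hc y hy => by
      refine ⟨sSup c, ?_, fun z hz => le_sSup hz⟩
      constructor
      constructor
      rintro ⟨g, hg⟩ ⟨h, hh⟩
      rw [Subgroup.mem_sSup_of_directedOn ⟨y, hy⟩ hc.directedOn] at hg hh
      obtain ⟨A, hAc, hgA⟩ := hg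
      obtain ⟨B, hBc, hhB⟩ := hh
      obtain ⟨C, hCc, hAC, hBC⟩ := hc.directedOn A hAc B hBc
      haveI : IsMulCommutative C := hcs hCc
      ext
      exact Subgroup.mul_comm_of_mem_isMulCommutative (H := C) (hAC hgA) (hBC hhB))
    (Subgroup.zpowers a) (Subgroup.zpowers_isMulCommutative a)
  exact ⟨M, ⟨hM.1, fun N hN hMN => le_antisymm (hM.2 hN hMN) hMN⟩,
    hle (Subgroup.mem_zpowers a)⟩

theorem stmt_12 {G : Type*} [Group G] (hna : ¬∀ a b : G, a * b = b * a)
    (hG : IsCSA G) : ∀ u : G, u ^ 2 = 1 → u = 1 := by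
  intro u hu2
  by_contra hu1
  have huinv : u⁻¹ = u := by
    rw [pow_two] at hu2
    exact inv_eq_of_mul_eq_one_right hu2
  -- u commutes with all of its conjugates
  have key : ∀ x : G, Commute u (x⁻¹ * u * x) := by
    intro x
    set v := x⁻¹ * u * x with hv
    have hvinv : v⁻¹ = v := by
      rw [hv]; simp [mul_assoc, huinv]
    by_cases hw1 : v * u = 1
    · have : v = u := by
        have := inv_eq_of_mul_eq_one_left hw1
        rw [huinv] at this; rw [this]
      rw [this]
    · obtain ⟨M, hM, hwM⟩ := exists_maximalAbelian_mem (v * u)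
      have hwinvM : u⁻¹ * (v * u) * u ∈ M := by
        have h2 : u * u = 1 := by rw [← pow_two]; exact hu2
        have : u⁻¹ * (v * u) * u = (v * u)⁻¹ := by
          rw [mul_inv_rev, hvinv, huinv, ← mul_assoc u v u,
            mul_assoc (u * v) u u, h2, mul_one]
        rw [this]
        exact M.inv_mem hwM
      by_cases huM : u ∈ M
      · -- u and v*u commute; cancel u on the right to get u*v = v*u
        haveI := hM.1
        have hc : u * (v * u) = (v * u) * u :=
          Subgroup.mul_comm_of_mem_isMulCommutative (H := M) huM hwM
        have hc' : (u * v) * u = (v * u) * u := by rw [mul_assoc]; exact hc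
        exact mul_right_cancel hc'
      · exact absurd (hG M hM u huM (v * u) hwM hwinvM) hw1
  -- take a maximal abelian M containing u; show M = ⊤
  obtain ⟨M, hM, huM⟩ := exists_maximalAbelian_mem u
  have hall : ∀ x : G, x ∈ M := by
    intro x
    by_contra hx
    set v := x⁻¹ * u * x with hv
    have hvM : v ∈ M := by
      by_contra hvM
      refine hu1 (hG M hM v hvM u huM ?_)
      have hcomm : u * v = v * u := key x
      have : v⁻¹ * u * v = u := by
        rw [mul_assoc, hcomm, ← mul_assoc, inv_mul_cancel, one_mul]
      rw [this]; exact huM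
    exact hu1 (hG M hM x hx u huM hvM)
  apply hna
  intro a b
  haveI := hM.1
  exact Subgroup.mul_comm_of_mem_isMulCommutative (H := M) (hall a) (hall b)
end

section
/- Let G be a torsion-free group in which the centralizer of every nontrivial element is infinite cyclic. Then G is a CSA-group. -/
/-!
If `g ≠ 1` lies in a maximal abelian subgroup `M`, then `C(g)` is abelian and contains `M`, so
`C(g) = M`; in particular `M = ⟨z⟩` is infinite cyclic. If also `x⁻¹ g x ∈ M`, then
`M = C(x⁻¹ g x) = x⁻¹ C(g) x = x⁻¹ M x`, so conjugation by `x` is an automorphism of `⟨z⟩ ≅ ℤ`,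
i.e. `z ↦ z^{±1}`. Hence `x²` centralizes `z` and lies in `M`; as `x² ≠ 1` by torsion-freeness,
`x ∈ C(x²) = M`.
-/

open Subgroup

section

variable {G : Type*} [Group G]

theorem IsMaximalAbelian.centralizer_eq {M : Subgroup G} (hM : IsMaximalAbelian M) {g : G}
    (hg : g ∈ M) (hcomm : IsMulCommutative (centralizer {g})) : centralizer {g} = M :=
  have := hM.1
  hM.2 _ hcomm fun _ hm => mem_centralizer_singleton_iff.mpr (setLike_mul_comm hm hg)

theorem conj_mem_centralizer_conj_iff (x g m : G) :
    x⁻¹ * m * x ∈ centralizer {x⁻¹ * g * x} ↔ m ∈ centralizer {g} := by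
  have conj_mul_conj (a b : G) : x⁻¹ * a * x * (x⁻¹ * b * x) = x⁻¹ * (a * b) * x := by group
  simp only [mem_centralizer_singleton_iff, conj_mul_conj, mul_left_inj, mul_right_inj]

theorem mem_normalizer_of_centralizer_conj_eq {M : Subgroup G} {g x : G}
    (hg : centralizer {g} = M) (hxg : centralizer {x⁻¹ * g * x} = M) :
    x ∈ normalizer (M : Set G) :=
  mem_normalizer_iff''.mpr fun m => by
    simpa only [hg, hxg] using (conj_mem_centralizer_conj_iff x g m).symm

theorem commute_sq_of_mem_normalizer_zpowers {x z : G} (hz : ¬IsOfFinOrder z)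
    (hx : x ∈ normalizer (zpowers z : Set G)) : Commute (x ^ 2) z := by
  obtain ⟨k, hk⟩ := mem_zpowers_iff.mp ((mem_normalizer_iff.mp hx z).mp (mem_zpowers z))
  obtain ⟨m, hm⟩ := mem_zpowers_iff.mp ((mem_normalizer_iff''.mp hx z).mp (mem_zpowers z))
  have conj_zpow_z (n : ℤ) : x * z ^ n * x⁻¹ = z ^ (k * n) := by
    rw [← conj_zpow, ← hk, zpow_mul]
  have hkm : k * m = 1 := injective_zpow_iff_not_isOfFinOrder.mpr hz <| by
    show z ^ (k * m) = z ^ (1 : ℤ)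
    rw [← conj_zpow_z, hm, zpow_one]
    group
  have hkk : k * k = 1 := by
    rcases Int.isUnit_iff.mp (IsUnit.of_mul_eq_one m hkm) with rfl | rfl <;> rfl
  rw [commute_iff_eq, ← mul_inv_eq_iff_eq_mul]
  calc x ^ 2 * z * (x ^ 2)⁻¹
      = x * (x * z ^ (1 : ℤ) * x⁻¹) * x⁻¹ := by rw [zpow_one, sq, mul_inv_rev]; group
    _ = z := by rw [conj_zpow_z, conj_zpow_z, ← mul_assoc, mul_one, hkk, zpow_one]

end

theorem stmt_13 {G : Type*} [Group G] (htf : ∀ g : G, g ≠ 1 → ¬IsOfFinOrder g)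
    (hcyc : ∀ g : G, g ≠ 1 → ∃ z : G, Subgroup.centralizer {g} = Subgroup.zpowers z) :
    IsCSA G := by
  intro M hM x hxM g hgM hconj
  by_contra hg
  have centralizer_eq (a : G) (ha : a ∈ M) (ha1 : a ≠ 1) : centralizer {a} = M :=
    hM.centralizer_eq ha <| by obtain ⟨z, hz⟩ := hcyc a ha1; rw [hz]; infer_instance
  obtain ⟨z, hz⟩ := hcyc g hg
  have hMz : M = zpowers z := (centralizer_eq g hgM hg).symm.trans hz
  have hz1 : z ≠ 1 := by
    rintro rfl
    rw [zpowers_one_eq_bot] at hMz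
    exact hg (by simpa [hMz] using hgM)
  have hconj1 : x⁻¹ * g * x ≠ 1 := by
    simpa only [inv_inv] using (conj_eq_one_iff (a := x⁻¹)).not.mpr hg
  have hxN : x ∈ normalizer (M : Set G) :=
    mem_normalizer_of_centralizer_conj_eq (centralizer_eq g hgM hg)
      (centralizer_eq _ hconj hconj1)
  have hx2 : x ^ 2 ∈ M := by
    rw [← centralizer_eq z (hMz ▸ mem_zpowers z) hz1, mem_centralizer_singleton_iff]
    exact commute_sq_of_mem_normalizer_zpowers (htf z hz1) (hMz ▸ hxN)
  have hx1 : x ≠ 1 := fun h => hxM (h ▸ M.one_mem)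
  have hx21 : x ^ 2 ≠ 1 := fun h => htf x hx1 (isOfFinOrder_iff_pow_eq_one.mpr ⟨2, two_pos, h⟩)
  exact hxM <| centralizer_eq _ hx2 hx21 ▸
    mem_centralizer_singleton_iff.mpr (Commute.self_pow x 2).eq
end

section
/- Every torsion-free virtually cyclic group is infinite cyclic or trivial. -/
/-!
Pass to the normal core of the cyclic subgroup: it is normal of finite index and generated by
some `z`. Conjugation by `g` maps `z` to `z` or `z⁻¹`; in the second case `g ^ n = z ^ k`
(with `n` the index) is fixed by conjugation by `g` but also sent to `z ^ (-k)`, which forces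
`g ^ n = 1` and hence `g = 1`. So `⟨z⟩` is central, the transfer `G →* ⟨z⟩` is `g ↦ g ^ n`,
and torsion-freeness makes it injective, so `G` is cyclic.
-/

open Subgroup MonoidHom

section

variable {G : Type*} [Group G]

theorem eq_one_of_pow_eq_one_of_torsionFree (htf : ∀ g : G, g ≠ 1 → ¬IsOfFinOrder g) {g : G}
    {n : ℕ} (hn : n ≠ 0) (h : g ^ n = 1) : g = 1 :=
  by_contra fun hg => htf g hg (isOfFinOrder_iff_pow_eq_one.2 ⟨n, Nat.pos_of_ne_zero hn, h⟩)

theorem conj_eq_self_or_inv_of_normal_zpowers {z : G} (hz : ¬IsOfFinOrder z)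
    [hN : (zpowers z).Normal] (g : G) : g * z * g⁻¹ = z ∨ g * z * g⁻¹ = z⁻¹ := by
  obtain ⟨k, hk⟩ := mem_zpowers_iff.1 (hN.conj_mem z (mem_zpowers z) g)
  obtain ⟨m, hm⟩ := mem_zpowers_iff.1 (hN.conj_mem z (mem_zpowers z) g⁻¹)
  have hmk : m * k = 1 := injective_zpow_iff_not_isOfFinOrder.2 hz <| by
    calc z ^ (m * k) = (g⁻¹ * z * g⁻¹⁻¹) ^ k := by rw [zpow_mul, hm]
      _ = g⁻¹ * (g * z * g⁻¹) * g := by rw [conj_zpow, hk, inv_inv]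
      _ = z ^ (1 : ℤ) := by group
  rcases Int.eq_one_or_neg_one_of_mul_eq_one' hmk with ⟨-, rfl⟩ | ⟨-, rfl⟩
  · exact Or.inl (by rw [← hk, zpow_one])
  · exact Or.inr (by rw [← hk, zpow_neg_one])

theorem mem_center_of_normal_zpowers (htf : ∀ g : G, g ≠ 1 → ¬IsOfFinOrder g) (z : G)
    [(zpowers z).Normal] [(zpowers z).FiniteIndex] : z ∈ center G := by
  rw [mem_center_iff]
  intro g
  rcases eq_or_ne z 1 with rfl | hz1
  · simp
  rcases conj_eq_self_or_inv_of_normal_zpowers (htf z hz1) g with h | h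
  · exact mul_inv_eq_iff_eq_mul.1 h
  obtain ⟨k, hk⟩ := mem_zpowers_iff.1 ((zpowers z).pow_index_mem g)
  have hk0 : k = 0 := by
    have : z ^ k = z ^ (-k) := by
      calc z ^ k = g * z ^ k * g⁻¹ := by
            rw [hk, ← pow_succ', pow_succ, mul_inv_cancel_right]
        _ = (g * z * g⁻¹) ^ k := by rw [conj_zpow]
        _ = z ^ (-k) := by rw [h, inv_zpow, zpow_neg]
    have := injective_zpow_iff_not_isOfFinOrder.2 (htf z hz1) this
    omega
  rw [hk0, zpow_zero, eq_comm] at hk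
  simp [eq_one_of_pow_eq_one_of_torsionFree htf FiniteIndex.index_ne_zero hk]

open scoped IsMulCommutative in
theorem isCyclic_of_le_center (htf : ∀ g : G, g ≠ 1 → ¬IsOfFinOrder g) {H : Subgroup G}
    [IsCyclic H] [H.FiniteIndex] (hH : H ≤ center G) : IsCyclic G := by
  have transfer_eq (g : G) : (transfer (MonoidHom.id H) g : G) = g ^ H.index := by
    rw [transfer_eq_pow (MonoidHom.id H) g fun k g₀ hk => ?_]
    · rfl
    · calc g₀⁻¹ * g ^ k * g₀ = g₀ * (g₀⁻¹ * g ^ k * g₀) * g₀⁻¹ := by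
            rw [mem_center_iff.1 (hH hk) g₀, mul_inv_cancel_right]
        _ = g ^ k := by group
  refine isCyclic_of_injective (transfer (MonoidHom.id H))
    ((injective_iff_map_eq_one _).2 fun g hg => ?_)
  refine eq_one_of_pow_eq_one_of_torsionFree htf (FiniteIndex.index_ne_zero (H := H)) ?_
  rw [← transfer_eq, hg, OneMemClass.coe_one]

end

theorem stmt_14 {G : Type*} [Group G] (htf : ∀ g : G, g ≠ 1 → ¬IsOfFinOrder g)
    (hvc : ∃ H : Subgroup G, IsCyclic H ∧ H.FiniteIndex) :
    (∀ x : G, x = 1) ∨ Nonempty (G ≃* Multiplicative ℤ) := by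
  obtain ⟨H, hHc, hHf⟩ := hvc
  obtain ⟨z, hz⟩ :=
    H.normalCore.isCyclic_iff_exists_zpowers_eq_top.1 (isCyclic_of_le H.normalCore_le)
  have : (zpowers z).Normal := hz ▸ H.normalCore_normal
  have : (zpowers z).FiniteIndex := hz ▸ H.finiteIndex_normalCore
  have : IsCyclic G :=
    isCyclic_of_le_center htf (zpowers_le.2 (mem_center_of_normal_zpowers htf z))
  by_cases htriv : ∀ x : G, x = 1
  · exact Or.inl htriv
  push Not at htriv
  obtain ⟨x, hx⟩ := htriv
  have : Infinite G := not_finite_iff_infinite.1 fun _ => htf x hx (isOfFinOrder_of_finite x)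
  exact Or.inr ⟨intCyclicMulEquiv.symm⟩
end

section
/- In the Baumslag–Solitar group G_{r,s} = ⟨a, b | a⁻¹bʳa = bˢ⟩ with r > 1 and |s| > 1, the elements a⁻¹ba and b do not commute. -/
/-!
Map `BS(r,s)` to the HNN extension of `ℤ = ⟨b⟩` in which the stable letter `t = a⁻¹` conjugates
`bʳ` to `bˢ`. The image of the commutator of `a⁻¹ba` and `b` is `t b t⁻¹ · b · t b⁻¹ t⁻¹ · b⁻¹`,
which is a reduced word: a pinch `t g t⁻¹` or `t⁻¹ g t` would need `b` to lie in `⟨bʳ⟩` or in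
`⟨bˢ⟩`, which fails because `r` and `|s|` exceed `1`. By Britton's lemma the commutator is
therefore nontrivial.
-/

/-- The defining relator of the Baumslag–Solitar group `BS(r,s)`:
`a⁻¹ * bʳ * a * b⁻ˢ`, with `a` the generator `false` and `b` the generator `true`. -/
def bsRel (r s : ℤ) : FreeGroup Bool :=
  (FreeGroup.of false)⁻¹ * FreeGroup.of true ^ r * FreeGroup.of false *
    FreeGroup.of true ^ (-s)

/-- The Baumslag–Solitar group `BS(r,s) = ⟨a, b ∣ a⁻¹bʳa = bˢ⟩`. -/
abbrev BaumslagSolitar (r s : ℤ) : Type :=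
  PresentedGroup ({bsRel r s} : Set (FreeGroup Bool))

open HNNExtension NormalWord in
theorem HNNExtension.not_commute_t_mul_of_mul_inv_t {G : Type*} [Group G] {A B : Subgroup G}
    {φ : A ≃* B} {g : G} (hA : g ∉ A) (hB : g ∉ B) :
    ¬Commute (t * of g * t⁻¹ : HNNExtension G A B φ) (of g) := by
  intro h
  let w : ReducedWord G A B :=
    { head := 1
      toList := [(1, g), (-1, g), (1, g⁻¹), (-1, g⁻¹)]
      chain := by simp [toSubgroup_one, toSubgroup_neg_one, hA, hB] }
  have hw : w.prod φ = of 1 := by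
    simpa [w, ReducedWord.prod, mul_assoc] using mul_inv_eq_one.2 h.eq
  simpa [w] using ReducedWord.toList_eq_nil_of_mem_of_range φ w ⟨1, hw.symm⟩

section RangeZPowEquiv

variable {G : Type*} [CommGroup G] [IsMulTorsionFree G] {r s : ℤ}

theorem injective_zpowGroupHom (hr : r ≠ 0) : Function.Injective (zpowGroupHom (α := G) r) :=
  zpow_left_injective hr

noncomputable def rangeZPowEquiv (hr : r ≠ 0) (hs : s ≠ 0) :
    (zpowGroupHom (α := G) r).range ≃* (zpowGroupHom (α := G) s).range :=
  (MonoidHom.ofInjective (injective_zpowGroupHom hr)).symm.trans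
    (MonoidHom.ofInjective (injective_zpowGroupHom hs))

theorem HNNExtension.t_mul_of_zpow (hr : r ≠ 0) (hs : s ≠ 0) (x : G) :
    (t * of x ^ r : HNNExtension _ _ _ (rangeZPowEquiv hr hs)) = of x ^ s * t := by
  have h := t_mul_of (φ := rangeZPowEquiv hr hs)
    (MonoidHom.ofInjective (injective_zpowGroupHom hr) x)
  rw [rangeZPowEquiv, MulEquiv.trans_apply, MulEquiv.symm_apply_apply, MonoidHom.ofInjective_apply,
    MonoidHom.ofInjective_apply] at h
  simp only [zpowGroupHom_apply, map_zpow] at h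
  exact h

end RangeZPowEquiv

namespace BaumslagSolitar

open HNNExtension

noncomputable def toHNNExtension {r s : ℤ} (hr : r ≠ 0) (hs : s ≠ 0) :
    BaumslagSolitar r s →* HNNExtension _ _ _ (rangeZPowEquiv (G := Multiplicative ℤ) hr hs) :=
  PresentedGroup.toGroup (f := fun x => if x then of (Multiplicative.ofAdd (1 : ℤ)) else t⁻¹) (by
    rintro _ rfl
    simp only [bsRel, map_mul, map_inv, map_zpow, FreeGroup.lift_apply_of, Bool.false_eq_true,
      ↓reduceIte, inv_inv]
    rw [t_mul_of_zpow]
    group)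

@[simp]
theorem toHNNExtension_of_false {r s : ℤ} (hr : r ≠ 0) (hs : s ≠ 0) :
    toHNNExtension hr hs (PresentedGroup.of false) = t⁻¹ :=
  PresentedGroup.toGroup.of _

@[simp]
theorem toHNNExtension_of_true {r s : ℤ} (hr : r ≠ 0) (hs : s ≠ 0) :
    toHNNExtension hr hs (PresentedGroup.of true) = of (Multiplicative.ofAdd (1 : ℤ)) :=
  PresentedGroup.toGroup.of _

theorem ofAdd_one_notMem_range_zpowGroupHom {n : ℤ} (hn : 1 < |n|) :
    Multiplicative.ofAdd (1 : ℤ) ∉ (zpowGroupHom (α := Multiplicative ℤ) n).range := by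
  rintro ⟨x, hx⟩
  have hdvd : n ∣ 1 := ⟨x.toAdd, by simpa using (congrArg Multiplicative.toAdd hx).symm⟩
  have := Int.isUnit_iff_abs_eq.mp (isUnit_of_dvd_one hdvd)
  omega

end BaumslagSolitar

theorem stmt_15 (r s : ℤ) (hr : 1 < r) (hs : 1 < |s|) :
    ¬Commute
      ((PresentedGroup.of (rels := ({bsRel r s} : Set (FreeGroup Bool))) false)⁻¹ *
        PresentedGroup.of (rels := ({bsRel r s} : Set (FreeGroup Bool))) true *
        PresentedGroup.of (rels := ({bsRel r s} : Set (FreeGroup Bool))) false)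
      (PresentedGroup.of (rels := ({bsRel r s} : Set (FreeGroup Bool))) true) := by
  have hr0 : r ≠ 0 := by omega
  have hs0 : s ≠ 0 := by rintro rfl; simp at hs
  intro h
  have h' := h.map (BaumslagSolitar.toHNNExtension hr0 hs0)
  simp only [map_mul, map_inv, BaumslagSolitar.toHNNExtension_of_false,
    BaumslagSolitar.toHNNExtension_of_true, inv_inv] at h'
  exact HNNExtension.not_commute_t_mul_of_mul_inv_t
    (BaumslagSolitar.ofAdd_one_notMem_range_zpowGroupHom (by rwa [abs_of_pos (by omega)]))
    (BaumslagSolitar.ofAdd_one_notMem_range_zpowGroupHom hs) h'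
end
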